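/- Let T be a tree and s a vertex of T such that every maximum dissociation set F of T contains s and s has exactly one neighbor in F. Then there exists a neighbor t of s that belongs to every maximum dissociation set of T. -/

import Mathlib

open Finset

variable {V : Type*} [Fintype V] [DecidableEq V]

/-- `F` is a dissociation set: it induces a subgraph of maximum degree at most 1,
i.e. every vertex of `F` has at most one neighbor in `F`. -/
def IsDissoc (G : SimpleGraph V) (F : Finset V) : Prop :=
  ∀ v ∈ F, ∀ u ∈ F, ∀ w ∈ F, G.Adj v u → G.Adj v w → u = w

open Classical in
/-- The dissociation number: maximum cardinality of a dissociation set. -/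
noncomputable def dissocNum (G : SimpleGraph V) : ℕ :=
  (Finset.univ.filter fun F : Finset V => IsDissoc G F).sup Finset.card

/-- A maximum dissociation set. -/
def IsMaxDissoc (G : SimpleGraph V) (F : Finset V) : Prop :=
  IsDissoc G F ∧ F.card = dissocNum G

open Classical in
/-- The number of maximum dissociation sets. -/
noncomputable def numMaxDissoc (G : SimpleGraph V) : ℕ :=
  (Finset.univ.filter fun F : Finset V => IsMaxDissoc G F).card

/-!
Suppose the neighbour `t` of `s` lying in some maximum dissociation set `F₁` is missed by another
one, `F₂`. In a tree, `s t` is a bridge; let `S` be the side of it containing `t`. Exchanging the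
parts of `F₁` and `F₂` inside `S` gives `B = (F₂ ∩ S) ∪ (F₁ \ S)` and `A = (F₁ ∩ S) ∪ (F₂ \ S)`.
Since `t ∉ F₂`, the set `B` is dissociated, and so is `A` once `s` is removed. As `s ∈ F₂`,
`|B| + |A \ {s}| = 2 dissocNum - 1`, and `A \ {s}` avoids `s`, so it is not maximum; hence `B` is.
But `s ∈ B` has no neighbour in `B`: its only neighbour in `S` is `t ∉ F₂`, and its only neighbour
in `F₁` is `t ∈ S`.
-/

namespace IsDissoc

variable {G : SimpleGraph V} {X Y : Finset V}

omit [Fintype V] [DecidableEq V] in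
lemma mono (hY : IsDissoc G Y) (hXY : X ⊆ Y) : IsDissoc G X :=
  fun v hv u hu w hw => hY v (hXY hv) u (hXY hu) w (hXY hw)

omit [Fintype V] in
lemma union (hX : IsDissoc G X) (hY : IsDissoc G Y)
    (hXY : ∀ x ∈ X, ∀ y ∈ Y, ¬G.Adj x y) : IsDissoc G (X ∪ Y) := by
  intro v hv u hu w hw hvu hvw
  rcases mem_union.1 hv with hv | hv
  · have side : ∀ z ∈ X ∪ Y, G.Adj v z → z ∈ X := fun z hz hvz =>
      (mem_union.1 hz).resolve_right fun hzY => hXY v hv z hzY hvz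
    exact hX v hv u (side u hu hvu) w (side w hw hvw) hvu hvw
  · have side : ∀ z ∈ X ∪ Y, G.Adj v z → z ∈ Y := fun z hz hvz =>
      (mem_union.1 hz).resolve_left fun hzX => hXY z hzX v hv hvz.symm
    exact hY v hv u (side u hu hvu) w (side w hw hvw) hvu hvw

end IsDissoc

omit [DecidableEq V] in
lemma card_le_dissocNum {G : SimpleGraph V} {F : Finset V} (hF : IsDissoc G F) :
    F.card ≤ dissocNum G := by
  classical
  exact le_sup (mem_filter.2 ⟨mem_univ _, hF⟩)

omit [DecidableEq V] in
lemma exists_isMaxDissoc (G : SimpleGraph V) : ∃ F : Finset V, IsMaxDissoc G F := by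
  classical
  have hne : (univ.filter fun F : Finset V => IsDissoc G F).Nonempty :=
    ⟨∅, mem_filter.2 ⟨mem_univ _, by simp [IsDissoc]⟩⟩
  obtain ⟨F, hF, hsup⟩ := exists_mem_eq_sup _ hne card
  exact ⟨F, (mem_filter.1 hF).2, by rw [dissocNum, hsup]⟩

lemma SimpleGraph.IsBridge.exists_side {G : SimpleGraph V} {t s : V} (hb : G.IsBridge s(t, s)) :
    ∃ S : Finset V, t ∈ S ∧ s ∉ S ∧ ∀ x ∈ S, ∀ y ∉ S, G.Adj x y → x = t ∧ y = s := by
  classical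
  set H := G.deleteEdges {s(t, s)}
  refine ⟨univ.filter (H.Reachable t), by simp, by simpa using SimpleGraph.isBridge_iff.1 hb, ?_⟩
  simp only [mem_filter, mem_univ, true_and]
  intro x hx y hy hxy
  have hedge : s(x, y) = s(t, s) := by
    by_contra hne
    exact hy (hx.trans (SimpleGraph.Adj.reachable (by simpa [H, hne] using hxy)))
  rcases Sym2.eq_iff.1 hedge with h | ⟨rfl, -⟩
  · exact h
  · exact absurd hx hb

section Exchange

variable {G : SimpleGraph V} {S F₁ F₂ : Finset V} {s t : V}

omit [Fintype V]

lemma isDissoc_inter_union_sdiff (hS : ∀ x ∈ S, ∀ y ∉ S, G.Adj x y → x = t ∧ y = s)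
    (h₁ : IsDissoc G F₁) (h₂ : IsDissoc G F₂) (ht : t ∉ F₂) :
    IsDissoc G (F₂ ∩ S ∪ F₁ \ S) :=
  (h₂.mono inter_subset_left).union (h₁.mono sdiff_subset) fun x hx y hy hxy =>
    ht ((hS x (mem_inter.1 hx).2 y (mem_sdiff.1 hy).2 hxy).1 ▸ (mem_inter.1 hx).1)

lemma isDissoc_inter_union_sdiff_insert
    (hS : ∀ x ∈ S, ∀ y ∉ S, G.Adj x y → x = t ∧ y = s) (h₁ : IsDissoc G F₁) (h₂ : IsDissoc G F₂) :
    IsDissoc G (F₁ ∩ S ∪ F₂ \ insert s S) :=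
  (h₁.mono inter_subset_left).union (h₂.mono sdiff_subset) fun x hx y hy hxy => by
    obtain ⟨-, hyS⟩ := mem_sdiff.1 hy
    rw [mem_insert, not_or] at hyS
    exact hyS.1 (hS x (mem_inter.1 hx).2 y hyS.2 hxy).2

end Exchange

omit [Fintype V] in
lemma card_exchange {S F₁ F₂ : Finset V} {s : V} (hsF : s ∈ F₂) (hsS : s ∉ S) :
    (F₂ ∩ S ∪ F₁ \ S).card + (F₁ ∩ S ∪ F₂ \ insert s S).card + 1 = F₁.card + F₂.card := by
  have hdisj : ∀ A B : Finset V, Disjoint (A ∩ S) (B \ S) := fun A B =>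
    disjoint_left.2 fun _ ha hb => (mem_sdiff.1 hb).2 (mem_inter.1 ha).2
  have herase : F₂ \ insert s S = (F₂ \ S).erase s := by
    ext; simp only [mem_sdiff, mem_insert, mem_erase]; tauto
  rw [card_union_of_disjoint (hdisj _ _), herase,
    card_union_of_disjoint ((hdisj F₁ F₂).mono_right (erase_subset _ _)),
    card_erase_of_mem (mem_sdiff.2 ⟨hsF, hsS⟩)]
  have h₁ := card_inter_add_card_sdiff F₁ S
  have h₂ := card_inter_add_card_sdiff F₂ S
  have hpos : 0 < (F₂ \ S).card := card_pos.2 ⟨s, mem_sdiff.2 ⟨hsF, hsS⟩⟩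
  omega

/-- If every maximum dissociation set `F` of a tree contains `s` and contains exactly one
neighbor of `s`, then some neighbor `t` of `s` belongs to every maximum dissociation set. -/
theorem stmt_18 (G : SimpleGraph V) (hT : G.IsTree) (s : V)
    (h : ∀ F : Finset V, IsMaxDissoc G F → s ∈ F ∧ ∃! u, u ∈ F ∧ G.Adj s u) :
    ∃ t, G.Adj s t ∧ ∀ F : Finset V, IsMaxDissoc G F → t ∈ F := by
  by_contra! hcon
  obtain ⟨F₁, hF₁⟩ := exists_isMaxDissoc G
  obtain ⟨-, t, ⟨-, hst⟩, htuniq⟩ := h F₁ hF₁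
  obtain ⟨F₂, hF₂, htF₂⟩ := hcon t hst
  obtain ⟨S, htS, hsS, hS⟩ :=
    (SimpleGraph.isAcyclic_iff_forall_adj_isBridge.1 hT.isAcyclic hst.symm).exists_side
  have hB := isDissoc_inter_union_sdiff hS hF₁.1 hF₂.1 htF₂
  have hA := isDissoc_inter_union_sdiff_insert hS hF₁.1 hF₂.1
  have hcard := card_exchange (F₁ := F₁) (h _ hF₂).1 hsS
  have hB_max : IsMaxDissoc G (F₂ ∩ S ∪ F₁ \ S) := by
    refine ⟨hB, ?_⟩
    have hA_lt : (F₁ ∩ S ∪ F₂ \ insert s S).card < dissocNum G :=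
      (card_le_dissocNum hA).lt_of_ne fun heq => by simpa [hsS] using (h _ ⟨hA, heq⟩).1
    have hB_le := card_le_dissocNum hB
    rw [hF₁.2, hF₂.2] at hcard
    omega
  obtain ⟨-, u, ⟨huB, hsu⟩, -⟩ := h _ hB_max
  rcases mem_union.1 huB with hu | hu
  · exact htF₂ ((hS u (mem_inter.1 hu).2 s hsS hsu.symm).1 ▸ (mem_inter.1 hu).1)
  · exact (mem_sdiff.1 hu).2 (htuniq u ⟨(mem_sdiff.1 hu).1, hsu⟩ ▸ htS)
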